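/- arXiv:2005.07227 — 4 statements merged into one kernel-verified Lean document; each statement's English description precedes it below -/
import Mathlib

section
/- Let M be a finite MDP with non-negative integer costs C : S × A → ℕ and target set T ⊆ S. Define the Bellman operator F on vectors v ∈ (ℕ ∪ {∞})^S by F(v)(s) = 0 if s ∈ T, and F(v)(s) = min over actions a of (C(s,a) + max over successors t ∈ Succ(s,a) of v(t)) otherwise. Let x_T be the vector with x_T(s) = 0 for s ∈ T and ∞ otherwise, and let n be the length of the longest simple path in M. Then iterating F on x_T reaches a fixed point in at most n steps, i.e., F^{n+1}(x_T) = F^n(x_T). -/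
open scoped Classical NNReal ENat

noncomputable section

/-- A consumption Markov decision process. -/
structure CMDP (S A : Type) [Fintype S] where
  Δ : S → A → S → NNReal
  Δ_sum : ∀ s a, (∑ t, Δ s a t) = 1
  C : S → A → ℕ
  R : Set S
  cap : ℕ

namespace CMDP

variable {S A : Type} [Fintype S]

/-- Strategies map histories (initial state, list of action/state steps) to actions. -/
abbrev Strat (S A : Type) : Type := S × List (A × S) → A

/-- Last state of a history. -/
def lastState (s : S) : List (A × S) → S
  | [] => s
  | (_, t) :: rest => lastState t rest

/-- The `i`-th state (0-indexed) of a history. -/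
def stateAt (s : S) (steps : List (A × S)) (i : ℕ) : S :=
  (s :: steps.map Prod.snd).getD i s

variable (M : CMDP S A)

def Succ (s : S) (a : A) : Set S := {t | 0 < M.Δ s a t}

/-- Total consumption along a finite path. -/
def consAux : S → List (A × S) → ℕ
  | _, [] => 0
  | s, (a, t) :: rest => M.C s a + consAux t rest

/-- One step of the energy-level update. -/
def levelStep (s : S) (a : A) (l : ℕ) : Option ℕ :=
  if s ∈ M.R then (if M.C s a ≤ M.cap then some (M.cap - M.C s a) else none)
  else (if M.C s a ≤ l then some (l - M.C s a) else none)

def energyFrom : Option ℕ → S → List (A × S) → Option ℕ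
  | none, _, _ => none
  | some l, _, [] => some l
  | some l, s, (a, t) :: rest => energyFrom (M.levelStep s a l) t rest

/-- Energy level of a history initialized by `d` (`none` = ⊥, exhaustion). -/
def energy (d : ℕ) (s : S) (steps : List (A × S)) : Option ℕ :=
  M.energyFrom (some d) s steps

/-- Validity of a finite path. -/
def ValidPath : S → List (A × S) → Prop
  | _, [] => True
  | s, (a, t) :: rest => t ∈ M.Succ s a ∧ ValidPath t rest

/-- First state of a run. -/
def runState (ρ : ℕ → S × A) (i : ℕ) : S := (ρ i).1

/-- The finite prefix of a run with `i` steps. -/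
def prefixSteps (ρ : ℕ → S × A) (i : ℕ) : List (A × S) :=
  (List.range i).map fun k => ((ρ k).2, (ρ (k + 1)).1)

def IsRun (ρ : ℕ → S × A) : Prop := ∀ i, (ρ (i + 1)).1 ∈ M.Succ (ρ i).1 (ρ i).2

/-- A run is `d`-safe if the energy level of every finite prefix is defined. -/
def DSafe (d : ℕ) (ρ : ℕ → S × A) : Prop :=
  ∀ i, M.energy d (runState ρ 0) (prefixSteps ρ i) ≠ none

/-- A run is compatible with a strategy. -/
def Compat (σ : Strat S A) (ρ : ℕ → S × A) : Prop :=
  M.IsRun ρ ∧ ∀ i, (ρ i).2 = σ (runState ρ 0, prefixSteps ρ i)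

def CompatFrom (σ : Strat S A) (s : S) (ρ : ℕ → S × A) : Prop :=
  M.Compat σ ρ ∧ runState ρ 0 = s

/-- A strategy is `d`-safe in `s` if all compatible runs from `s` are `d`-safe. -/
def SafeStrat (σ : Strat S A) (d : ℕ) (s : S) : Prop :=
  ∀ ρ, M.CompatFrom σ s ρ → M.DSafe d ρ

/-- A finite history compatible with a strategy. -/
def CompatHist (σ : Strat S A) (s : S) (steps : List (A × S)) : Prop :=
  M.ValidPath s steps ∧
    ∀ (i : ℕ) (h : i < steps.length), (steps.get ⟨i, h⟩).1 = σ (s, steps.take i)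

def Memoryless (σ : Strat S A) : Prop :=
  ∀ h₁ h₂ : S × List (A × S), lastState h₁.1 h₁.2 = lastState h₂.1 h₂.2 → σ h₁ = σ h₂

/-- Cost of a run up to the first visit of `T` (∞ if `T` is never visited). -/
def reachCost (T : Set S) (ρ : ℕ → S × A) : ℕ∞ :=
  ⨅ i ∈ {i : ℕ | runState ρ i ∈ T}, (M.consAux (runState ρ 0) (prefixSteps ρ i) : ℕ∞)

/-- `i`-step bounded reachability cost. -/
def reachCostBdd (T : Set S) (n : ℕ) (ρ : ℕ → S × A) : ℕ∞ :=
  ⨅ i ∈ {i : ℕ | i ≤ n ∧ runState ρ i ∈ T}, (M.consAux (runState ρ 0) (prefixSteps ρ i) : ℕ∞)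

/-- Reachability cost requiring at least one step. -/
def reachCostPlus (T : Set S) (ρ : ℕ → S × A) : ℕ∞ :=
  ⨅ i ∈ {i : ℕ | 1 ≤ i ∧ runState ρ i ∈ T}, (M.consAux (runState ρ 0) (prefixSteps ρ i) : ℕ∞)

def reachCostStrat (T : Set S) (σ : Strat S A) (s : S) : ℕ∞ :=
  ⨆ ρ ∈ {ρ | M.CompatFrom σ s ρ}, M.reachCost T ρ

def minReach (T : Set S) (s : S) : ℕ∞ :=
  ⨅ σ : Strat S A, M.reachCostStrat T σ s

def minReachBdd (T : Set S) (n : ℕ) (s : S) : ℕ∞ :=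
  ⨅ σ : Strat S A, ⨆ ρ ∈ {ρ | M.CompatFrom σ s ρ}, M.reachCostBdd T n ρ

def minReachPlus (T : Set S) (s : S) : ℕ∞ :=
  ⨅ σ : Strat S A, ⨆ ρ ∈ {ρ | M.CompatFrom σ s ρ}, M.reachCostPlus T ρ

/-- The Bellman operator for minimum cost reachability of `T`. -/
def bellman (T : Set S) (v : S → ℕ∞) : S → ℕ∞ := fun s =>
  if s ∈ T then 0 else ⨅ a : A, ((M.C s a : ℕ∞) + ⨆ t ∈ M.Succ s a, v t)

/-- The initial vector: `0` on `T`, `∞` elsewhere. -/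
def xTvec (T : Set S) : S → ℕ∞ := fun s => if s ∈ T then 0 else ⊤

/-- Length of the longest simple path of `M`. -/
def longestSimple : ℕ :=
  sSup {n | ∃ (s : S) (steps : List (A × S)),
    M.ValidPath s steps ∧ (s :: steps.map Prod.snd).Nodup ∧ steps.length = n}

/-- The augmented CMDP `M̃` with a fresh non-reload copy of every state. -/
def augment : CMDP (S ⊕ S) A where
  Δ := fun x a t =>
    Sum.elim (fun u => M.Δ (Sum.elim id id x) a u) (fun _ => (0 : NNReal)) t
  Δ_sum := by
    intro x a
    rw [Fintype.sum_sum_type]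
    simp [M.Δ_sum (Sum.elim id id x) a]
  C := fun x a => M.C (Sum.elim id id x) a
  R := Sum.inl '' M.R
  cap := M.cap

/-- Truncation to `0` on reload states. -/
def strunc (x : S → ℕ∞) : S → ℕ∞ := fun s => if s ∈ M.R then 0 else x s

/-- The truncated Bellman-like operator `G`. -/
def opG (v : S → ℕ∞) : S → ℕ∞ := fun s =>
  ⨅ a : A, ((M.C s a : ℕ∞) + ⨆ t ∈ M.Succ s a, M.strunc v t)

/-- Minimal `d ≤ cap` such that some strategy is `d`-safe in `s` (∞ if none). -/
def safeVec (s : S) : ℕ∞ :=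
  ⨅ d ∈ {d : ℕ | d ≤ M.cap ∧ ∃ σ : Strat S A, M.SafeStrat σ d s}, (d : ℕ∞)

/-- An action safe in a state. -/
def SafeAction (s : S) (a : A) : Prop :=
  (s ∉ M.R ∧ ((M.C s a : ℕ∞) + ⨆ t ∈ M.Succ s a, M.safeVec t) ≤ M.safeVec s) ∨
  (s ∈ M.R ∧ ((M.C s a : ℕ∞) + ⨆ t ∈ M.Succ s a, M.safeVec t) ≤ (M.cap : ℕ∞))

/-- A CMDP is decreasing if every (valid) simple cycle has positive consumption. -/
def Decreasing : Prop :=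
  ∀ (s : S) (steps : List (A × S)), M.ValidPath s steps → steps ≠ [] →
    lastState s steps = s → (s :: (steps.map Prod.snd).dropLast).Nodup →
    0 < M.consAux s steps

/-- Selection according to a selection rule: the action of the largest
element of the domain below the counter value. -/
def selectFrom (φ : ℕ → Option A) (m : ℕ) (a₀ : A) : A :=
  (((List.range (m + 1)).reverse).findSome? φ).getD a₀

/-- The finite counter strategy `Σ^y` induced by a counter selector. -/
def counterStrategy (sel : S → ℕ → Option A) (y : S → ℕ) (a₀ : A) : Strat S A :=
  fun h =>
    match M.energy (y h.1) h.1 h.2 with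
    | some m => selectFrom (sel (lastState h.1 h.2)) m a₀
    | none => a₀

/-- The `SPR` value of an action. -/
def spr (s : S) (a : A) (x : S → ℕ∞) : ℕ∞ :=
  (M.C s a : ℕ∞) +
    ⨅ t ∈ M.Succ s a, max (x t) (⨆ t' ∈ {t' ∈ M.Succ s a | t' ≠ t}, M.safeVec t')

def opA (T : Set S) (x : S → ℕ∞) : S → ℕ∞ := fun s =>
  if s ∈ T then M.safeVec s else ⨅ a : A, M.spr s a x

/-- Two-sided truncation. -/
def trunc2 (x : S → ℕ∞) : S → ℕ∞ := fun s =>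
  if (M.cap : ℕ∞) < x s then ⊤ else if s ∈ M.R then 0 else x s

def opB (T : Set S) (x : S → ℕ∞) : S → ℕ∞ := M.trunc2 (M.opA T x)

def yTvec (T : Set S) : S → ℕ∞ := fun s => if s ∈ T then M.safeVec s else ⊤

def VisitsWithin (T : Set S) (i : ℕ) (ρ : ℕ → S × A) : Prop :=
  ∃ j ≤ i, runState ρ j ∈ T

def Visits (T : Set S) (ρ : ℕ → S × A) : Prop := ∃ j, runState ρ j ∈ T

/-- Minimal `ℓ ≤ cap` s.t. some `ℓ`-safe strategy from `s` has a run visiting `T`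
within the first `i` steps. -/
def safePRBdd (T : Set S) (i : ℕ) (s : S) : ℕ∞ :=
  ⨅ ℓ ∈ {ℓ : ℕ | ℓ ≤ M.cap ∧ ∃ σ : Strat S A, M.SafeStrat σ ℓ s ∧
      ∃ ρ, M.CompatFrom σ s ρ ∧ VisitsWithin T i ρ}, (ℓ : ℕ∞)

/-- Minimal `ℓ ≤ cap` s.t. some `ℓ`-safe strategy from `s` has a run visiting `T`. -/
def safePR (T : Set S) (s : S) : ℕ∞ :=
  ⨅ ℓ ∈ {ℓ : ℕ | ℓ ≤ M.cap ∧ ∃ σ : Strat S A, M.SafeStrat σ ℓ s ∧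
      ∃ ρ, M.CompatFrom σ s ρ ∧ Visits T ρ}, (ℓ : ℕ∞)

/-- Replace the set of reload states. -/
def setReload (R' : Set S) : CMDP S A := { M with R := R' }

/-- Probability of a finite continuation of a history under a strategy. -/
def pathProbAux (σ : Strat S A) : S × List (A × S) → List (A × S) → NNReal
  | _, [] => 1
  | h, (a, t) :: rest =>
      (if σ h = a then M.Δ (lastState h.1 h.2) a t else 0) *
        pathProbAux σ (h.1, h.2 ++ [(a, t)]) rest

/-- Probability that the length-`n` prefix of a run from `s` under `σ`
satisfies the predicate `P`. -/
def probEvent [Fintype A] (σ : Strat S A) (s : S) (n : ℕ) (P : List (A × S) → Prop) : NNReal :=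
  ∑ f : Fin n → A × S,
    if P (List.ofFn f) then M.pathProbAux σ (s, []) (List.ofFn f) else 0

/-- Number of visits of `T` along a finite path. -/
def visitCount (T : Set S) (s : S) (steps : List (A × S)) : ℕ :=
  (s :: steps.map Prod.snd).countP (fun x => decide (x ∈ T))

/-- `T` is visited infinitely often with probability one under `σ` from `s`. -/
def buchiAS [Fintype A] (σ : Strat S A) (s : S) (T : Set S) : Prop :=
  ∀ k : ℕ,
    (⨆ n : ℕ, M.probEvent σ s n (fun steps => k ≤ visitCount T s steps)) = 1

/-- Minimal `d ≤ cap` s.t. some strategy is `d`-safe in `s` and visits `T`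
infinitely often almost surely. -/
def safeBuchiVec [Fintype A] (T : Set S) (s : S) : ℕ∞ :=
  ⨅ d ∈ {d : ℕ | d ≤ M.cap ∧ ∃ σ : Strat S A, M.SafeStrat σ d s ∧ M.buchiAS σ s T}, (d : ℕ∞)

/-- Iterated memory update of a memory structure. -/
def updStar {Mem : Type} (upd : Mem → S → A → S → Mem) : Mem → S → List (A × S) → Mem
  | m, _, [] => m
  | m, s, (a, t) :: rest => updStar upd (upd m s a t) t rest

/-- Finite-memory strategies: encodable by a finite memory structure. -/
def FinMemStrategy (σ : Strat S A) : Prop :=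
  ∃ (Mem : Type) (_ : Finite Mem) (init : S → Mem) (upd : Mem → S → A → S → Mem)
    (nxt : Mem → S → A),
    ∀ h : S × List (A × S), σ h = nxt (updStar upd (init h.1) h.1 h.2) (lastState h.1 h.2)

/-- The joint run `α ⊙ ρ`. -/
def jointRun (s : S) (steps : List (A × S)) (ρ : ℕ → S × A) : ℕ → S × A :=
  fun i => if h : i < steps.length then (stateAt s steps i, (steps.get ⟨i, h⟩).1)
           else ρ (i - steps.length)

end CMDP

/-!
Write `vₖ = Fᵏ v` for a vector `v` with `F v ≤ v` vanishing on `T` (such as `x_T`); the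
sequence `(vₖ)` is antitone. If `vₖ₊₁ s < vₖ s`, then `s ∉ T`, and an action `a` optimal for
`vₖ₊₁ s = C(s,a) + max_{t ∈ Succ(s,a)} vₖ t` has, when `k ≥ 1`, a successor `t` with
`vₖ t < vₖ₋₁ t`. Iterating yields a path `s₀ … sₖ₊₁` along which every state after `sᵢ` has
`vₖ₋ᵢ`-value at most `vₖ₋ᵢ₊₁ sᵢ < vₖ₋ᵢ sᵢ`, hence differs from `sᵢ`: the path is simple. So no
strict decrease happens once `k` is the length of the longest simple path.
-/

namespace CMDP

variable {S A : Type} [Fintype S] (M : CMDP S A) (T : Set S)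

theorem nonempty_succ (s : S) (a : A) : (M.Succ s a).Nonempty := by
  obtain ⟨t, -, ht⟩ := Finset.exists_ne_zero_of_sum_ne_zero (s := Finset.univ) (f := M.Δ s a)
    (by rw [M.Δ_sum s a]; exact one_ne_zero)
  exact ⟨t, pos_iff_ne_zero.2 ht⟩

theorem length_le_longestSimple {s : S} {steps : List (A × S)} (hv : M.ValidPath s steps)
    (hnd : (s :: steps.map Prod.snd).Nodup) : steps.length ≤ M.longestSimple := by
  refine le_csSup ⟨Fintype.card S, ?_⟩ ⟨s, steps, hv, hnd, rfl⟩
  rintro n ⟨s', steps', -, hnd', rfl⟩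
  have := hnd'.length_le_card
  simp only [List.length_cons, List.length_map] at this
  omega

theorem bellman_mono : Monotone (M.bellman T) := by
  intro v w hvw s
  unfold bellman
  split_ifs
  · exact le_rfl
  · gcongr with a t
    exact hvw t

theorem bellman_xTvec_le : M.bellman T (xTvec T) ≤ xTvec T := by
  intro s
  by_cases hs : s ∈ T <;> simp [bellman, xTvec, hs]

theorem bellman_iterate_le {v : S → ℕ∞} (hv : M.bellman T v ≤ v) (k : ℕ) :
    M.bellman T ((M.bellman T)^[k] v) ≤ (M.bellman T)^[k] v := by
  simpa only [Function.iterate_succ_apply'] using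
    (M.bellman_mono T).antitone_iterate_of_map_le hv k.le_succ

theorem iterate_bellman_of_mem {v : S → ℕ∞} (hvT : ∀ s ∈ T, v s = 0) :
    ∀ k, ∀ s ∈ T, (M.bellman T)^[k] v s = 0
  | 0 => hvT
  | k + 1 => fun s hs => by rw [Function.iterate_succ_apply']; exact if_pos hs

theorem notMem_of_bellman_lt {w : S → ℕ∞} (hwT : ∀ s ∈ T, w s = 0) {s : S}
    (hlt : M.bellman T w s < w s) : s ∉ T := fun hs => by
  rw [hwT s hs, bellman, if_pos hs] at hlt
  exact lt_irrefl 0 hlt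

theorem bellman_le_of_notMem (w : S → ℕ∞) {s : S} (hs : s ∉ T) (a : A) :
    M.bellman T w s ≤ (M.C s a : ℕ∞) + ⨆ t ∈ M.Succ s a, w t := by
  rw [bellman, if_neg hs]
  exact iInf_le _ a

theorem exists_bellman_eq_of_lt_top {w : S → ℕ∞} {s : S} (hs : s ∉ T)
    (hlt : M.bellman T w s < ⊤) :
    ∃ a, (M.C s a : ℕ∞) + ⨆ t ∈ M.Succ s a, w t = M.bellman T w s := by
  rw [bellman, if_neg hs] at hlt ⊢
  obtain ⟨a, -⟩ := iInf_lt_iff.1 hlt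
  have : Nonempty A := ⟨a⟩
  exact ciInf_mem _

theorem le_bellman_of_mem_succ {w : S → ℕ∞} {s : S} {a : A}
    (ha : (M.C s a : ℕ∞) + ⨆ t ∈ M.Succ s a, w t = M.bellman T w s) {t : S}
    (ht : t ∈ M.Succ s a) : w t ≤ M.bellman T w s :=
  ha ▸ (le_biSup w ht).trans le_add_self

theorem exists_mem_succ_lt {w w' : S → ℕ∞} {s : S} (hs : s ∉ T) {a : A}
    (ha : (M.C s a : ℕ∞) + ⨆ t ∈ M.Succ s a, w' t = M.bellman T w' s)
    (hlt : M.bellman T w' s < M.bellman T w s) : ∃ t ∈ M.Succ s a, w' t < w t := by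
  have hsup : (⨆ t ∈ M.Succ s a, w' t) < ⨆ t ∈ M.Succ s a, w t :=
    lt_of_add_lt_add_left (ha ▸ hlt.trans_le (M.bellman_le_of_notMem T w hs a))
  obtain ⟨t, ht, hlt'⟩ := lt_biSup_iff.1 hsup
  exact ⟨t, ht, (le_biSup w' ht).trans_lt hlt'⟩

theorem exists_simple_path_of_bellman_iterate_lt {v : S → ℕ∞} (hv : M.bellman T v ≤ v)
    (hvT : ∀ s ∈ T, v s = 0) :
    ∀ (k : ℕ) (s : S), M.bellman T ((M.bellman T)^[k] v) s < (M.bellman T)^[k] v s →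
      ∃ steps : List (A × S), M.ValidPath s steps ∧ (s :: steps.map Prod.snd).Nodup ∧
        steps.length = k + 1 ∧
        ∀ t ∈ steps.map Prod.snd,
          (M.bellman T)^[k] v t ≤ M.bellman T ((M.bellman T)^[k] v) s := by
  intro k
  induction k with
  | zero =>
    intro s hlt
    have hs := M.notMem_of_bellman_lt T hvT hlt
    obtain ⟨a, ha⟩ := M.exists_bellman_eq_of_lt_top T hs (hlt.trans_le le_top)
    obtain ⟨t, ht⟩ := M.nonempty_succ s a
    have hbound : ∀ x ∈ [(a, t)].map Prod.snd, v x ≤ M.bellman T v s := by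
      simpa using M.le_bellman_of_mem_succ T ha ht
    refine ⟨[(a, t)], ⟨ht, trivial⟩, List.nodup_cons.2 ⟨fun hmem => ?_, List.nodup_singleton t⟩,
      rfl, hbound⟩
    exact (hbound s hmem).not_gt hlt
  | succ k ih =>
    intro s hlt
    have hs := M.notMem_of_bellman_lt T (M.iterate_bellman_of_mem T hvT (k + 1)) hlt
    obtain ⟨a, ha⟩ := M.exists_bellman_eq_of_lt_top T hs (hlt.trans_le le_top)
    have hw := M.bellman_iterate_le T hv k
    simp only [Function.iterate_succ_apply'] at ha hlt ⊢
    set w := (M.bellman T)^[k] v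
    obtain ⟨t, ht, htlt⟩ := M.exists_mem_succ_lt T hs ha hlt
    obtain ⟨steps, hvalid, hnd, hlen, hbound⟩ := ih t htlt
    have hbound' : ∀ x ∈ ((a, t) :: steps).map Prod.snd,
        M.bellman T w x ≤ M.bellman T (M.bellman T w) s := by
      simp only [List.map_cons, List.mem_cons, forall_eq_or_imp]
      refine ⟨M.le_bellman_of_mem_succ T ha ht, fun x hx => ?_⟩
      calc M.bellman T w x ≤ w x := hw x
        _ ≤ M.bellman T w t := hbound x hx
        _ ≤ M.bellman T (M.bellman T w) s := M.le_bellman_of_mem_succ T ha ht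
    refine ⟨(a, t) :: steps, ⟨ht, hvalid⟩, List.nodup_cons.2 ⟨fun hmem => ?_, hnd⟩,
      by simp [hlen], hbound'⟩
    exact (hbound' s hmem).not_gt hlt

theorem iterate_bellman_longestSimple_succ {v : S → ℕ∞} (hv : M.bellman T v ≤ v)
    (hvT : ∀ s ∈ T, v s = 0) :
    (M.bellman T)^[M.longestSimple + 1] v = (M.bellman T)^[M.longestSimple] v := by
  rw [Function.iterate_succ_apply']
  refine le_antisymm (M.bellman_iterate_le T hv _) fun s => not_lt.1 fun hlt => ?_
  obtain ⟨steps, hvalid, hnd, hlen, -⟩ :=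
    M.exists_simple_path_of_bellman_iterate_lt T hv hvT _ s hlt
  have := M.length_le_longestSimple hvalid hnd
  omega

end CMDP

open CMDP in
/-- Iterating the Bellman operator on `x_T` reaches a fixed point within `n` steps,
`n` the length of the longest simple path. -/
theorem bellman_fixed_point {S A : Type} [Fintype S] (M : CMDP S A) (T : Set S) :
    (M.bellman T)^[M.longestSimple + 1] (xTvec T) =
      (M.bellman T)^[M.longestSimple] (xTvec T) :=
  M.iterate_bellman_longestSimple_succ T (M.bellman_xTvec_le T) fun _ hs => if_pos hs
end
end

section
/- In the setting of minimum-cost reachability with non-negative costs, there exists a memoryless strategy σ that is optimal: for every state s, the supremum over σ-compatible runs from s of the cost up to the first visit of T equals MinReach_T(s). -/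
open scoped Classical NNReal ENat

noncomputable section

/-!
Let `V = minReach T`. Outside `T`, the first action of an optimal strategy is optimal for the
Bellman inequality `C u a + max_{t ∈ Succ u a} V t ≤ V u`, so greedily playing such actions never
lets the cost paid so far plus the current value exceed the initial value. Greedy play alone can,
however, cycle forever through zero-cost states of equal value. We therefore rank the states:
rank `n + 1` means some optimal action leads, whenever the value does not drop and `T` is not
hit, to states of rank `n`. Every state of finite value outside `T` has a rank, for otherwise
following an optimal strategy only through unranked states would build a run that never meets
`T`. The memoryless strategy playing the rank-witnessing action makes `(V, rank)` strictly
decrease lexicographically, hence reaches `T` at cost at most `V`.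
-/

namespace CMDP

section Histories

variable {S A : Type}

lemma lastState_append (s : S) (l₁ l₂ : List (A × S)) :
    lastState s (l₁ ++ l₂) = lastState (lastState s l₁) l₂ := by
  induction l₁ generalizing s with
  | nil => rfl
  | cons p l ih => exact ih p.2

@[simp]
lemma lastState_snoc (s : S) (l : List (A × S)) (a : A) (t : S) :
    lastState s (l ++ [(a, t)]) = t := by
  rw [lastState_append]
  rfl

lemma prefixSteps_succ (ρ : ℕ → S × A) (n : ℕ) :
    prefixSteps ρ (n + 1) = prefixSteps ρ n ++ [((ρ n).2, (ρ (n + 1)).1)] := by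
  simp [prefixSteps, List.range_succ]

lemma lastState_prefixSteps (ρ : ℕ → S × A) (n : ℕ) :
    lastState (runState ρ 0) (prefixSteps ρ n) = runState ρ n := by
  cases n with
  | zero => rfl
  | succ n => rw [prefixSteps_succ, lastState_snoc]; rfl

def consRun (p : S × A) (ρ : ℕ → S × A) : ℕ → S × A
  | 0 => p
  | n + 1 => ρ n

lemma prefixSteps_consRun_succ (p : S × A) (ρ : ℕ → S × A) (n : ℕ) :
    prefixSteps (consRun p ρ) (n + 1) = (p.2, (ρ 0).1) :: prefixSteps ρ n := by
  simp only [prefixSteps, List.range_succ_eq_map, List.map_cons, List.map_map]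
  rfl

def residualStrat (σ : Strat S A) (s : S) (l : List (A × S)) : Strat S A :=
  fun h => σ (s, l ++ h.2)

@[simp]
lemma residualStrat_apply_nil (σ : Strat S A) (s u : S) (l : List (A × S)) :
    residualStrat σ s l (u, []) = σ (s, l) := by
  simp [residualStrat]

lemma residualStrat_residualStrat (σ : Strat S A) (s u : S) (l l' : List (A × S)) :
    residualStrat (residualStrat σ s l) u l' = residualStrat σ s (l ++ l') := by
  funext h
  simp [residualStrat]

end Histories

variable {S A : Type} [Fintype S] (M : CMDP S A)

lemma consAux_append (s : S) (l₁ l₂ : List (A × S)) :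
    M.consAux s (l₁ ++ l₂) = M.consAux s l₁ + M.consAux (lastState s l₁) l₂ := by
  induction l₁ generalizing s with
  | nil => simp [consAux, lastState]
  | cons p l ih => simp [consAux, lastState, ih, Nat.add_assoc]

lemma consAux_prefixSteps_succ (ρ : ℕ → S × A) (n : ℕ) :
    M.consAux (runState ρ 0) (prefixSteps ρ (n + 1)) =
      M.consAux (runState ρ 0) (prefixSteps ρ n) + M.C (runState ρ n) (ρ n).2 := by
  rw [prefixSteps_succ, consAux_append, lastState_prefixSteps]
  rfl

lemma succ_nonempty (u : S) (a : A) : (M.Succ u a).Nonempty := by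
  by_contra h
  have hzero : ∀ t, M.Δ u a t = 0 := fun t =>
    nonpos_iff_eq_zero.1 (not_lt.1 fun ht => h ⟨t, ht⟩)
  simpa [hzero] using M.Δ_sum u a

lemma exists_compatFrom_forall_prefixSteps (σ : Strat S A) (s : S) (Q : List (A × S) → Prop)
    (h0 : Q [])
    (hstep : ∀ l, Q l → ∃ t ∈ M.Succ (lastState s l) (σ (s, l)), Q (l ++ [(σ (s, l), t)])) :
    ∃ ρ, M.CompatFrom σ s ρ ∧ ∀ n, Q (prefixSteps ρ n) := by
  choose next hnext hQ using hstep
  let hist : ℕ → {l // Q l} := fun n =>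
    Nat.rec ⟨[], h0⟩ (fun _ l => ⟨l.1 ++ [(σ (s, l.1), next l.1 l.2)], hQ l.1 l.2⟩) n
  let ρ : ℕ → S × A := fun n => (lastState s (hist n).1, σ (s, (hist n).1))
  have hpre : ∀ n, prefixSteps ρ n = (hist n).1 := by
    intro n
    induction n with
    | zero => rfl
    | succ n ih => simp [prefixSteps_succ, ih, ρ, hist]
  refine ⟨ρ, ⟨⟨fun n => ?_, fun n => ?_⟩, rfl⟩, fun n => hpre n ▸ (hist n).2⟩
  · simpa [ρ, hist] using hnext _ (hist n).2
  · simp only [ρ, runState, hpre]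
    rfl

lemma nonempty_compatFrom (σ : Strat S A) (s : S) : {ρ | M.CompatFrom σ s ρ}.Nonempty := by
  obtain ⟨ρ, hρ, -⟩ := M.exists_compatFrom_forall_prefixSteps σ s (fun _ => True) trivial
    fun l _ => ⟨(M.succ_nonempty _ _).some, (M.succ_nonempty _ _).some_mem, trivial⟩
  exact ⟨ρ, hρ⟩

lemma compatFrom_congr {σ τ : Strat S A} {s : S} (h : ∀ l, σ (s, l) = τ (s, l))
    (ρ : ℕ → S × A) : M.CompatFrom σ s ρ ↔ M.CompatFrom τ s ρ := by
  simp only [CompatFrom, Compat]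
  constructor <;> rintro ⟨⟨hrun, hact⟩, rfl⟩ <;> simp [hrun, hact, h]

lemma compatFrom_consRun (τ : Strat S A) {u t : S} (ht : t ∈ M.Succ u (τ (u, [])))
    {ρ : ℕ → S × A} (hρ : M.CompatFrom (residualStrat τ u [(τ (u, []), t)]) t ρ) :
    M.CompatFrom τ u (consRun (u, τ (u, [])) ρ) := by
  obtain ⟨⟨hrun, hact⟩, rfl⟩ := hρ
  refine ⟨⟨fun n => ?_, fun n => ?_⟩, rfl⟩
  · cases n with
    | zero => exact ht
    | succ n => exact hrun n
  · cases n with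
    | zero => rfl
    | succ n =>
      rw [prefixSteps_consRun_succ]
      exact hact n

variable (T : Set S)

lemma reachCost_le_reachCostStrat {σ : Strat S A} {s : S} {ρ : ℕ → S × A}
    (hρ : M.CompatFrom σ s ρ) : M.reachCost T ρ ≤ M.reachCostStrat T σ s :=
  le_iSup₂ (f := fun ρ _ => M.reachCost T ρ) ρ hρ

lemma reachCostStrat_congr {σ τ : Strat S A} {s : S} (h : ∀ l, σ (s, l) = τ (s, l)) :
    M.reachCostStrat T σ s = M.reachCostStrat T τ s := by
  simp only [reachCostStrat, Set.mem_ofPred_eq, M.compatFrom_congr h]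

lemma reachCost_consRun {u : S} (hu : u ∉ T) (a : A) (ρ : ℕ → S × A) :
    M.reachCost T (consRun (u, a) ρ) = M.C u a + M.reachCost T ρ := by
  have hcost : ∀ n, (M.consAux u (prefixSteps (consRun (u, a) ρ) (n + 1)) : ℕ∞) =
      M.C u a + M.consAux (runState ρ 0) (prefixSteps ρ n) := by
    intro n
    rw [prefixSteps_consRun_succ]
    push_cast [consAux]
    rfl
  simp only [reachCost, Set.mem_ofPred_eq, ENat.add_iInf]
  refine le_antisymm (le_iInf₂ fun n hn => ?_) (le_iInf₂ fun n hn => ?_)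
  · exact (iInf₂_le (n + 1) hn).trans_eq (hcost n)
  · cases n with
    | zero => exact absurd hn hu
    | succ n => exact (iInf₂_le n hn).trans_eq (hcost n).symm

lemma add_reachCostStrat_residualStrat_le (τ : Strat S A) {u t : S} (hu : u ∉ T)
    (ht : t ∈ M.Succ u (τ (u, []))) :
    M.C u (τ (u, [])) + M.reachCostStrat T (residualStrat τ u [(τ (u, []), t)]) t ≤
      M.reachCostStrat T τ u := by
  rw [reachCostStrat, ENat.add_biSup (M.nonempty_compatFrom _ t)]
  refine iSup₂_le fun ρ hρ => ?_
  rw [← M.reachCost_consRun T hu]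
  exact M.reachCost_le_reachCostStrat T (M.compatFrom_consRun τ ht hρ)

lemma exists_reachCostStrat_eq_minReach [Nonempty A] (u : S) :
    ∃ σ, M.reachCostStrat T σ u = M.minReach T u :=
  ciInf_mem (fun σ : Strat S A => M.reachCostStrat T σ u)

def IsOptimalAct (u : S) (a : A) : Prop :=
  M.C u a + ⨆ t ∈ M.Succ u a, M.minReach T t ≤ M.minReach T u

lemma isOptimalAct_of_reachCostStrat_le (τ : Strat S A) {u : S} (hu : u ∉ T)
    (hτ : M.reachCostStrat T τ u ≤ M.minReach T u) : M.IsOptimalAct T u (τ (u, [])) := by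
  rw [IsOptimalAct, ENat.add_biSup (M.succ_nonempty _ _)]
  refine iSup₂_le fun t ht => le_trans ?_ hτ
  calc M.C u (τ (u, [])) + M.minReach T t
      ≤ M.C u (τ (u, [])) + M.reachCostStrat T (residualStrat τ u [(τ (u, []), t)]) t :=
        add_le_add_right (iInf_le _ _) _
    _ ≤ M.reachCostStrat T τ u := M.add_reachCostStrat_residualStrat_le T τ hu ht

def IsProgressMeasure (W : S → ℕ∞) (f : S → A) (r : S → ℕ) : Prop :=
  ∀ u ∉ T, W u ≠ ⊤ → ∀ t ∈ M.Succ u (f u),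
    M.C u (f u) + W t ≤ W u ∧ (W t = W u → t ∉ T → r t < r u)

section ProgressMeasure

variable {M T} {W : S → ℕ∞} {f : S → A} {r : S → ℕ} (hW : M.IsProgressMeasure T W f r)
  {ρ : ℕ → S × A} (hρ : M.IsRun ρ) (hf : ∀ k, (ρ k).2 = f (runState ρ k))
  (h0 : W (runState ρ 0) ≠ ⊤)
include hW hρ hf h0

lemma consAux_add_le_of_isProgressMeasure (k : ℕ) (hk : ∀ j < k, runState ρ j ∉ T) :
    M.consAux (runState ρ 0) (prefixSteps ρ k) + W (runState ρ k) ≤ W (runState ρ 0) := by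
  induction k with
  | zero => simp [prefixSteps, consAux]
  | succ k ih =>
    have hle := ih fun j hj => hk j (hj.trans k.lt_succ_self)
    have hfin : W (runState ρ k) ≠ ⊤ := ne_top_of_le_ne_top h0 (le_add_self.trans hle)
    have hsucc : runState ρ (k + 1) ∈ M.Succ (runState ρ k) (f (runState ρ k)) :=
      hf k ▸ hρ k
    calc (M.consAux (runState ρ 0) (prefixSteps ρ (k + 1)) : ℕ∞) + W (runState ρ (k + 1))
        = M.consAux (runState ρ 0) (prefixSteps ρ k) +
            (M.C (runState ρ k) (f (runState ρ k)) + W (runState ρ (k + 1))) := by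
          rw [consAux_prefixSteps_succ, hf k]
          push_cast
          ring
      _ ≤ M.consAux (runState ρ 0) (prefixSteps ρ k) + W (runState ρ k) :=
          add_le_add_right (hW _ (hk k k.lt_succ_self) hfin _ hsucc).1 _
      _ ≤ W (runState ρ 0) := hle

lemma exists_runState_mem_of_isProgressMeasure : ∃ k, runState ρ k ∈ T := by
  by_contra! hT
  have hfin : ∀ k, W (runState ρ k) ≠ ⊤ := fun k =>
    ne_top_of_le_ne_top h0
      (le_add_self.trans (consAux_add_le_of_isProgressMeasure hW hρ hf h0 k fun j _ => hT j))
  obtain ⟨k, hk⟩ := WellFounded.not_rel_apply_succ (r := (· < ·))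
    fun k => toLex (W (runState ρ k), r (runState ρ k))
  obtain ⟨hle, hrank⟩ := hW _ (hT k) (hfin k) _ (hf k ▸ hρ k)
  refine hk (Prod.Lex.toLex_lt_toLex.2 ?_)
  rcases (le_add_self.trans hle).lt_or_eq with hlt | heq
  · exact Or.inl hlt
  · exact Or.inr ⟨heq, hrank heq (hT (k + 1))⟩

lemma reachCost_le_of_isProgressMeasure : M.reachCost T ρ ≤ W (runState ρ 0) := by
  have hT := exists_runState_mem_of_isProgressMeasure hW hρ hf h0
  calc M.reachCost T ρ ≤ M.consAux (runState ρ 0) (prefixSteps ρ (Nat.find hT)) := by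
        unfold reachCost
        exact iInf₂_le (f := fun i _ => (M.consAux (runState ρ 0) (prefixSteps ρ i) : ℕ∞)) _
          (Nat.find_spec hT)
    _ ≤ M.consAux (runState ρ 0) (prefixSteps ρ (Nat.find hT)) + W (runState ρ (Nat.find hT)) :=
        le_self_add
    _ ≤ W (runState ρ 0) :=
        consAux_add_le_of_isProgressMeasure hW hρ hf h0 _ fun j hj => Nat.find_min hT hj

end ProgressMeasure

theorem reachCostStrat_le_of_isProgressMeasure {W : S → ℕ∞} {f : S → A} {r : S → ℕ}
    (hW : M.IsProgressMeasure T W f r) (s : S) :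
    M.reachCostStrat T (fun h => f (lastState h.1 h.2)) s ≤ W s := by
  by_cases hs : W s = ⊤
  · exact hs ▸ le_top
  refine iSup₂_le fun ρ ⟨⟨hρ, hact⟩, hρs⟩ => ?_
  subst hρs
  exact reachCost_le_of_isProgressMeasure hW hρ
    (fun k => (hact k).trans (congrArg f (lastState_prefixSteps ρ k))) hs

def escapeSet : ℕ → Set S
  | 0 => ∅
  | n + 1 => {u | ∃ a, M.IsOptimalAct T u a ∧
      ∀ t ∈ M.Succ u a, M.minReach T t = M.minReach T u → t ∉ T → t ∈ escapeSet n}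

lemma escapeSet_mono : Monotone (M.escapeSet T) := by
  refine monotone_nat_of_le_succ fun n => ?_
  induction n with
  | zero => exact Set.empty_subset _
  | succ n ih =>
    rintro u ⟨a, ha, hsucc⟩
    exact ⟨a, ha, fun t ht hval hT => ih (hsucc t ht hval hT)⟩

lemma exists_iUnion_escapeSet_subset : ∃ N, ⋃ n, M.escapeSet T n ⊆ M.escapeSet T N := by
  have hfin := Set.toFinite (⋃ n, M.escapeSet T n)
  simpa only [hfin.coe_toFinset] using
    (M.escapeSet_mono T).directed_le.exists_mem_subset_of_finset_subset_biUnion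
      hfin.coe_toFinset.subset

lemma exists_succ_not_mem_iUnion_escapeSet {v : S} (hv : v ∉ ⋃ n, M.escapeSet T n) {a : A}
    (ha : M.IsOptimalAct T v a) :
    ∃ t ∈ M.Succ v a, M.minReach T t = M.minReach T v ∧ t ∉ T ∧ t ∉ ⋃ n, M.escapeSet T n := by
  by_contra! h
  obtain ⟨N, hN⟩ := M.exists_iUnion_escapeSet_subset T
  exact hv (Set.mem_iUnion.2 ⟨N + 1, a, ha, fun t ht hval hT => hN (h t ht hval hT)⟩)

lemma mem_iUnion_escapeSet [Nonempty A] {u : S} (hu : u ∉ T) (hfin : M.minReach T u ≠ ⊤) :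
    u ∈ ⋃ n, M.escapeSet T n := by
  by_contra hesc
  obtain ⟨σ, hσ⟩ := M.exists_reachCostStrat_eq_minReach T u
  let Stuck : S → Prop := fun v =>
    v ∉ T ∧ M.minReach T v = M.minReach T u ∧ v ∉ ⋃ n, M.escapeSet T n
  let Inv : List (A × S) → Prop := fun l => Stuck (lastState u l) ∧
    M.reachCostStrat T (residualStrat σ u l) (lastState u l) ≤ M.minReach T u
  have hinit : Inv [] :=
    ⟨⟨hu, rfl, hesc⟩,
      (M.reachCostStrat_congr T fun l => by simp [residualStrat, lastState]).trans_le hσ.le⟩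
  have hstep : ∀ l, Inv l →
      ∃ t ∈ M.Succ (lastState u l) (σ (u, l)), Inv (l ++ [(σ (u, l), t)]) := by
    rintro l ⟨⟨hvT, hval, hvesc⟩, hres⟩
    have hopt := M.isOptimalAct_of_reachCostStrat_le T (residualStrat σ u l) hvT (hval ▸ hres)
    rw [residualStrat_apply_nil] at hopt
    obtain ⟨t, ht, htval, htT, htesc⟩ := M.exists_succ_not_mem_iUnion_escapeSet T hvesc hopt
    have hcost := M.add_reachCostStrat_residualStrat_le T (residualStrat σ u l) hvT
      (by rwa [residualStrat_apply_nil])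
    simp only [residualStrat_apply_nil, residualStrat_residualStrat] at hcost
    refine ⟨t, ht, ?_⟩
    simp only [Inv, Stuck, lastState_snoc]
    exact ⟨⟨htT, htval.trans hval, htesc⟩, (le_add_self.trans hcost).trans hres⟩
  obtain ⟨ρ, hρ, hstuck⟩ := M.exists_compatFrom_forall_prefixSteps σ u Inv hinit hstep
  have hnever : ∀ n, runState ρ n ∉ T := fun n => by
    rw [← lastState_prefixSteps, hρ.2]
    exact (hstuck n).1.1
  have htop : M.reachCost T ρ = ⊤ :=
    top_unique (le_iInf₂ fun n hn => absurd hn (hnever n))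
  exact hfin (hσ ▸ top_unique (htop ▸ M.reachCost_le_reachCostStrat T hρ))

lemma exists_isProgressMeasure_minReach [Nonempty A] :
    ∃ f r, M.IsProgressMeasure T (M.minReach T) f r := by
  let rank : S → ℕ := fun u => sInf {n | u ∈ M.escapeSet T n}
  have hact : ∀ u, ∃ a, u ∉ T → M.minReach T u ≠ ⊤ → M.IsOptimalAct T u a ∧
      ∀ t ∈ M.Succ u a, M.minReach T t = M.minReach T u → t ∉ T → rank t < rank u := by
    intro u
    by_cases hu : u ∉ T ∧ M.minReach T u ≠ ⊤
    · have hmem : u ∈ M.escapeSet T (rank u) :=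
        Nat.sInf_mem (Set.mem_iUnion.1 (M.mem_iUnion_escapeSet T hu.1 hu.2))
      obtain ⟨n, hn⟩ : ∃ n, rank u = n + 1 :=
        Nat.exists_eq_add_one.2 (Nat.pos_of_ne_zero fun h => by simp [h, escapeSet] at hmem)
      rw [hn] at hmem
      obtain ⟨a, ha, hsucc⟩ := hmem
      exact ⟨a, fun _ _ => ⟨ha, fun t ht hval hT =>
        hn ▸ Nat.lt_succ_of_le (Nat.sInf_le (hsucc t ht hval hT))⟩⟩
    · exact ⟨Classical.arbitrary A, fun h1 h2 => absurd ⟨h1, h2⟩ hu⟩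
  choose f hf using hact
  refine ⟨f, rank, fun u hu hfin t ht => ⟨?_, (hf u hu hfin).2 t ht⟩⟩
  exact (add_le_add_right (le_iSup₂ (f := fun t _ => M.minReach T t) t ht) _).trans
    (hf u hu hfin).1

end CMDP

open CMDP in
/-- There exists a memoryless strategy optimal for minimum-cost reachability. -/
theorem exists_memoryless_optimal {S A : Type} [Fintype S] [Nonempty A]
    (M : CMDP S A) (T : Set S) :
    ∃ σ : Strat S A, Memoryless σ ∧
      ∀ s : S, M.reachCostStrat T σ s = M.minReach T s := by
  obtain ⟨f, r, hf⟩ := M.exists_isProgressMeasure_minReach T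
  exact ⟨fun h => f (lastState h.1 h.2), fun _ _ hlast => congrArg f hlast,
    fun s => le_antisymm (M.reachCostStrat_le_of_isProgressMeasure T hf s) (iInf_le _ _)⟩
end
end

section
/- Define the truncation operator on vectors x ∈ (ℕ ∪ {∞})^S by ⌊x⌋(s) = x(s) if s ∉ R and ⌊x⌋(s) = 0 if s ∈ R, and the truncated operator G(v)(s) = min_a (C(s,a) + max_{t ∈ Succ(s,a)} ⌊v⌋(t)). Let ∞⃗ be the all-∞ vector and x_R the vector that is 0 on R and ∞ elsewhere, and let F be the Bellman operator on the augmented CMDP M̃ (with non-reload copies s̃ of each state). Then for every i ≥ 0: G^i(∞⃗)(s) = F^i(x_R)(s̃) for each s ∈ R, and G^i(∞⃗)(s) = F^i(x_R)(s) for each s ∈ S \ R. -/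
open scoped Classical NNReal ENat

noncomputable section

lemma aux_augment_Succ {S A : Type} [Fintype S] (M : CMDP S A) (x : S ⊕ S) (a : A) :
    M.augment.Succ x a = Sum.inl '' M.Succ (Sum.elim id id x) a := by
  ext t
  cases t with
  | inl u => simp [CMDP.Succ, CMDP.augment]
  | inr u => simp [CMDP.Succ, CMDP.augment]

lemma aux_key {S A : Type} [Fintype S] (M : CMDP S A) (i : ℕ) (s : S) :
    (M.augment.bellman (Sum.inl '' M.R))^[i] (CMDP.xTvec (Sum.inl '' M.R)) (Sum.inr s)
      = (M.opG)^[i] ⊤ s ∧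
    (M.augment.bellman (Sum.inl '' M.R))^[i] (CMDP.xTvec (Sum.inl '' M.R)) (Sum.inl s)
      = if s ∈ M.R then 0 else (M.opG)^[i] ⊤ s := by
  induction i generalizing s with
  | zero =>
    constructor
    · simp [CMDP.xTvec]
    · simp [CMDP.xTvec]
  | succ n ih =>
    have hinr : ∀ t : S,
        (M.augment.bellman (Sum.inl '' M.R))^[n + 1] (CMDP.xTvec (Sum.inl '' M.R)) (Sum.inr t)
          = (M.opG)^[n + 1] ⊤ t := by
      intro t
      rw [Function.iterate_succ_apply', Function.iterate_succ_apply']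
      have hnt : (Sum.inr t : S ⊕ S) ∉ Sum.inl '' M.R := by simp
      simp only [CMDP.bellman, if_neg hnt, CMDP.opG]
      refine iInf_congr fun a => ?_
      congr 1
      rw [aux_augment_Succ, iSup_image]
      refine biSup_congr fun u hu => ?_
      rw [(ih u).2]
      simp [CMDP.strunc]
    refine ⟨hinr s, ?_⟩
    by_cases hs : s ∈ M.R
    · rw [Function.iterate_succ_apply']
      have : (Sum.inl s : S ⊕ S) ∈ Sum.inl '' M.R := ⟨s, hs, rfl⟩
      simp [CMDP.bellman, this, hs]
    · rw [Function.iterate_succ_apply', if_neg hs, Function.iterate_succ_apply']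
      have hnt : (Sum.inl s : S ⊕ S) ∉ Sum.inl '' M.R := by
        simpa using hs
      simp only [CMDP.bellman, if_neg hnt, CMDP.opG]
      refine iInf_congr fun a => ?_
      congr 1
      rw [aux_augment_Succ, iSup_image]
      refine biSup_congr fun u hu => ?_
      rw [(ih u).2]
      simp [CMDP.strunc]

open CMDP in
/-- Iterates of the truncated operator `G` on `M` coincide with iterates of the
Bellman operator on the augmented CMDP with target the reload states. -/
theorem opG_iterate_eq_augment_bellman {S A : Type} [Fintype S] (M : CMDP S A) :
    ∀ i : ℕ,
      (∀ s ∈ M.R, (M.opG)^[i] (⊤ : S → ℕ∞) s =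
        (M.augment.bellman (Sum.inl '' M.R))^[i] (xTvec (Sum.inl '' M.R)) (Sum.inr s)) ∧
      (∀ s ∉ M.R, (M.opG)^[i] (⊤ : S → ℕ∞) s =
        (M.augment.bellman (Sum.inl '' M.R))^[i] (xTvec (Sum.inl '' M.R)) (Sum.inl s)) := by
  intro i
  refine ⟨fun s _ => ((aux_key M i s).1).symm, fun s hs => ?_⟩
  rw [(aux_key M i s).2, if_neg hs]
end
end

section
/- In a decreasing consumption MDP, any memoryless strategy σ which in every state with Safe_M(s) < ∞ selects an action safe in s (per the definition below) is Safe_M(s)-safe in every state s. More precisely, for every state s with Safe_M(s) < ∞ and every σ-compatible finite path α starting at s, EnergyLevel_{Safe_M(s)}(α) ≠ ⊥ and EnergyLevel_{Safe_M(s)}(α) ≥ Safe_M(last(α)). -/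
open scoped Classical NNReal ENat

noncomputable section

namespace CMDP

variable {S A : Type} [Fintype S] {M : CMDP S A} {σ : Strat S A} {s t : S} {a : A}

lemma CompatHist.of_cons {rest : List (A × S)} (hml : Memoryless σ)
    (h : M.CompatHist σ s ((a, t) :: rest)) :
    a = σ (s, []) ∧ t ∈ M.Succ s a ∧ M.CompatHist σ t rest := by
  obtain ⟨⟨hsucc, hvalid⟩, hcomp⟩ := h
  refine ⟨by simpa using hcomp 0 (by simp), hsucc, hvalid, fun i hi => ?_⟩
  have hi' := hcomp (i + 1) (by simpa using hi)
  simp only [List.get_cons_succ, List.take_succ_cons] at hi'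
  exact hi'.trans (hml _ _ rfl)

/-- At a reload state the level is reset to `cap` before the action is paid for. -/
lemma exists_levelStep_of_add_le {l : ℕ} {x : ℕ∞}
    (h : (M.C s a : ℕ∞) + x ≤ ((if s ∈ M.R then M.cap else l : ℕ) : ℕ∞)) :
    ∃ l', M.levelStep s a l = some l' ∧ x ≤ l' := by
  have hC : M.C s a ≤ if s ∈ M.R then M.cap else l := by exact_mod_cast le_self_add.trans h
  refine ⟨(if s ∈ M.R then M.cap else l) - M.C s a, ?_, ?_⟩
  · unfold levelStep
    split_ifs at hC ⊢ <;> rfl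
  · rw [ENat.natCast_sub]
    exact ENat.le_sub_of_add_le_left (ENat.natCast_ne_top _) h

lemma SafeAction.exists_levelStep {l : ℕ} (ha : M.SafeAction s a) (ht : t ∈ M.Succ s a)
    (hl : M.safeVec s ≤ l) : ∃ l', M.levelStep s a l = some l' ∧ M.safeVec t ≤ l' := by
  apply exists_levelStep_of_add_le
  have hsucc : (M.C s a : ℕ∞) + M.safeVec t ≤ M.C s a + ⨆ t' ∈ M.Succ s a, M.safeVec t' :=
    add_le_add_right (le_biSup M.safeVec ht) _
  rcases ha with ⟨hR, hle⟩ | ⟨hR, hle⟩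
  · rw [if_neg hR]
    exact hsucc.trans (hle.trans hl)
  · rw [if_pos hR]
    exact hsucc.trans hle

/-- The invariant `safeVec ≤ level` is preserved by safe actions, so it holds along every
compatible path, starting from any level above `safeVec`. -/
theorem exists_energyFrom_ge_safeVec (hml : Memoryless σ)
    (hsel : ∀ s : S, M.safeVec s < ⊤ → M.SafeAction s (σ (s, []))) :
    ∀ (steps : List (A × S)) (s : S) (l : ℕ), M.safeVec s ≤ l → M.CompatHist σ s steps →
      ∃ e : ℕ, M.energyFrom (some l) s steps = some e ∧
        M.safeVec (lastState s steps) ≤ e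
  | [], _, l, hl, _ => ⟨l, rfl, hl⟩
  | (a, t) :: rest, s, l, hl, hcomp => by
    obtain ⟨rfl, ht, hrest⟩ := hcomp.of_cons hml
    obtain ⟨l', hl', hsafe⟩ :=
      (hsel s (hl.trans_lt (ENat.natCast_lt_top l))).exists_levelStep ht hl
    simpa only [energyFrom, lastState, hl'] using
      exists_energyFrom_ge_safeVec hml hsel rest t l' hsafe hrest

end CMDP

open CMDP in
theorem memoryless_safe_strategy_general {S A : Type} [Fintype S] (M : CMDP S A)
    (σ : Strat S A) (hml : Memoryless σ)
    (hsel : ∀ s : S, M.safeVec s < ⊤ → M.SafeAction s (σ (s, []))) :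
    ∀ (s : S) (d : ℕ), M.safeVec s = (d : ℕ∞) →
      ∀ steps : List (A × S), M.CompatHist σ s steps →
        ∃ l : ℕ, M.energy d s steps = some l ∧
          M.safeVec (lastState s steps) ≤ (l : ℕ∞) :=
  fun s d hd steps hcomp => exists_energyFrom_ge_safeVec hml hsel steps s d hd.le hcomp

open CMDP in
/-- A memoryless strategy that always selects safe actions is `Safe(s)`-safe in
every state `s`: along every compatible finite path the energy level is defined
and dominates the safe value of the last state. -/
theorem memoryless_safe_strategy {S A : Type} [Fintype S] (M : CMDP S A)
    (hdec : M.Decreasing) (σ : Strat S A) (hml : Memoryless σ)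
    (hsel : ∀ s : S, M.safeVec s < ⊤ → M.SafeAction s (σ (s, []))) :
    ∀ (s : S) (d : ℕ), M.safeVec s = (d : ℕ∞) →
      ∀ steps : List (A × S), M.CompatHist σ s steps →
        ∃ l : ℕ, M.energy d s steps = some l ∧
          M.safeVec (lastState s steps) ≤ (l : ℕ∞) :=
  memoryless_safe_strategy_general M σ hml hsel
end
end
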